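/- arXiv:2311.11833 — 2 statements merged into one kernel-verified Lean document; each statement's English description precedes it below -/
import Mathlib

section
/- (Theorem 1) Let n and m be positive integers, let A be an invertible n×n real matrix, let D be an n×n real matrix, and let b ∈ ℝⁿ with ‖b‖ = 1. For a real number ε and integer α with 1 ≤ α ≤ m, define the averaged perturbation solution x̂_α(ε) := (1/2)((A + (α·ε) • D)⁻¹ b + (A − (α·ε) • D)⁻¹ b). Then there exist real coefficients β₁,…,β_m and constants C > 0 and ε₀ > 0 such that for every real ε with 0 < |ε| < ε₀, all the matrices A ± (α·ε) • D (α = 1,…,m) are invertible and ‖Σ_{α=1}^m β_α x̂_α(ε) − A⁻¹ b‖ ≤ C · |ε|^{2m}; that is, a linear combination of the m averaged perturbation solutions recovers the true solution x* = A⁻¹ b with O(ε^{2m}) accuracy. -/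
/-! Write `p = A⁻¹D` and `S(t) = ½((A + tD)⁻¹ + (A - tD)⁻¹)`. Since `(1 ± tp)(A ± tD)⁻¹ = A⁻¹`
and the factors `1 + tp`, `1 - tp` commute, `(1 - t²p²) S(t) = A⁻¹`, i.e.
`S(t) = A⁻¹ + t²p² S(t)`. Iterating this `m` times writes `S(t)` as a polynomial of degree `< m`
in `t²`, with constant term `A⁻¹`, plus the remainder `t^{2m} p^{2m} S(t)`; and `‖S(t)‖ ≤ 2‖A⁻¹‖`
as soon as `|t|‖p‖ ≤ 1/2`. Taking for `β` the values at `0` of the Lagrange basis on the nodes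
`α²` gives `∑ β_α (α²)^j = 0^j` for `j < m`, so `∑ β_α S(αε)` cancels every non-constant term and
leaves `A⁻¹` up to `O(ε^{2m})`. -/

open scoped Matrix.Norms.L2Operator

/-- Matrix-vector product, with the vector living in Euclidean space (so that vector
norms are the Euclidean ones). -/
noncomputable def mulVecE {n : ℕ} (M : Matrix (Fin n) (Fin n) ℝ)
    (v : EuclideanSpace ℝ (Fin n)) : EuclideanSpace ℝ (Fin n) :=
  (WithLp.equiv 2 (Fin n → ℝ)).symm (M.mulVec ((WithLp.equiv 2 (Fin n → ℝ)) v))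

/-- The averaged perturbation solution
`x̂_α(ε) = (1/2)((A + (α ε) • D)⁻¹ b + (A - (α ε) • D)⁻¹ b)`. -/
noncomputable def xhat {n : ℕ} (A D : Matrix (Fin n) (Fin n) ℝ)
    (b : EuclideanSpace ℝ (Fin n)) (ε α : ℝ) : EuclideanSpace ℝ (Fin n) :=
  (1 / 2 : ℝ) • (mulVecE (A + (α * ε) • D)⁻¹ b + mulVecE (A - (α * ε) • D)⁻¹ b)

open Finset

theorem eq_geom_sum_mul_add_pow_mul {R : Type*} [Ring R] {x y w : R} (h : x = y + w * x) (N : ℕ) :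
    x = (∑ k ∈ range N, w ^ k) * y + w ^ N * x := by
  induction N with
  | zero => simp
  | succ N ih =>
    calc x = (∑ k ∈ range N, w ^ k) * y + w ^ N * (y + w * x) := by rwa [← h]
      _ = _ := by rw [sum_range_succ, pow_succ]; noncomm_ring

theorem norm_le_two_mul_of_eq_add_mul {R : Type*} [SeminormedRing R] {x y w : R}
    (h : x = y + w * x) (hw : ‖w‖ ≤ 1 / 2) : ‖x‖ ≤ 2 * ‖y‖ := by
  have : ‖x‖ ≤ ‖y‖ + ‖w‖ * ‖x‖ :=
    calc ‖x‖ = ‖y + w * x‖ := by rw [← h]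
      _ ≤ ‖y‖ + ‖w‖ * ‖x‖ := (norm_add_le _ _).trans (by gcongr; exact norm_mul_le _ _)
  nlinarith [norm_nonneg x]

theorem one_sub_sq_mul_add_eq {R : Type*} [Ring R] {q u v y : R}
    (hu : (1 + q) * u = y) (hv : (1 - q) * v = y) :
    (1 - q ^ 2) * (u + v) = 2 * y :=
  calc (1 - q ^ 2) * (u + v) = (1 - q) * ((1 + q) * u) + (1 + q) * ((1 - q) * v) := by
        noncomm_ring
    _ = 2 * y := by rw [hu, hv]; noncomm_ring

theorem exists_sum_mul_pow_eq_zero_pow {F ι : Type*} [Field F] [Fintype ι] {x : ι → F}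
    (hx : Function.Injective x) :
    ∃ β : ι → F, ∀ j < Fintype.card ι, ∑ i, β i * x i ^ j = 0 ^ j := by
  classical
  refine ⟨fun i => (Lagrange.basis univ x i).eval 0, fun j hj => ?_⟩
  have hdeg : (Polynomial.X ^ j : Polynomial F).degree < #(univ : Finset ι) := by
    rw [Polynomial.degree_X_pow, card_univ]; exact_mod_cast hj
  have := congrArg (Polynomial.eval 0) (Lagrange.eq_interpolate hx.injOn hdeg)
  simp only [Lagrange.interpolate_apply, Polynomial.eval_finsetSum, Polynomial.eval_mul,
    Polynomial.eval_C, Polynomial.eval_pow, Polynomial.eval_X] at this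
  rw [this]
  exact sum_congr rfl fun i _ => mul_comm _ _

theorem sum_smul_sum_range_pow_smul_eq {𝕜 M ι : Type*} [CommSemiring 𝕜] [AddCommMonoid M]
    [Module 𝕜 M] (s : Finset ι) {β c : ι → 𝕜} {m : ℕ} (hm : 0 < m)
    (hβ : ∀ j < m, ∑ i ∈ s, β i * c i ^ j = 0 ^ j) (g : ℕ → M) (r : 𝕜) :
    ∑ i ∈ s, β i • ∑ j ∈ range m, (c i * r) ^ j • g j = g 0 := by
  have hj : ∀ j ∈ range m, ∑ i ∈ s, β i • (c i * r) ^ j • g j = (0 ^ j * r ^ j) • g j := by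
    intro j hj
    simp_rw [smul_smul, ← sum_smul, mul_pow, ← mul_assoc, ← sum_mul, hβ j (mem_range.1 hj)]
  simp_rw [smul_sum]
  rw [sum_comm, sum_congr rfl hj, sum_eq_single_of_mem 0 (mem_range.2 hm)]
  · simp
  · intro j _ hj0
    simp [zero_pow hj0]

section AvgInverse

variable {𝕜 R : Type*} [Field 𝕜] [Ring R] [Algebra 𝕜 R]

noncomputable def avgInverse (a d : R) (t : 𝕜) : R :=
  (1 / 2 : 𝕜) • (Ring.inverse (a + t • d) + Ring.inverse (a - t • d))

theorem inverse_mul_add_smul {a : R} (ha : IsUnit a) (d : R) (t : 𝕜) :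
    Ring.inverse a * (a + t • d) = 1 + t • (Ring.inverse a * d) := by
  rw [mul_add, Ring.inverse_mul_cancel _ ha, mul_smul_comm]

theorem avgInverse_eq [NeZero (2 : 𝕜)] {a : R} (ha : IsUnit a) (d : R) {t : 𝕜}
    (hadd : IsUnit (a + t • d)) (hsub : IsUnit (a - t • d)) :
    avgInverse a d t = Ring.inverse a + (t • (Ring.inverse a * d)) ^ 2 * avgInverse a d t := by
  set q := t • (Ring.inverse a * d)
  have hu : (1 + q) * Ring.inverse (a + t • d) = Ring.inverse a := by
    rw [← inverse_mul_add_smul ha, mul_assoc, Ring.mul_inverse_cancel _ hadd, mul_one]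
  have hv : (1 - q) * Ring.inverse (a - t • d) = Ring.inverse a := by
    have h := inverse_mul_add_smul ha d (-t)
    rw [neg_smul, ← sub_eq_add_neg, neg_smul, ← sub_eq_add_neg] at h
    rw [← h, mul_assoc, Ring.mul_inverse_cancel _ hsub, mul_one]
  have hs := one_sub_sq_mul_add_eq hu hv
  rw [sub_mul, one_mul, sub_eq_iff_eq_add] at hs
  rw [avgInverse, mul_smul_comm]
  conv_lhs => rw [hs]
  rw [smul_add, two_mul, ← two_smul 𝕜, smul_smul, one_div_mul_cancel two_ne_zero, one_smul]

end AvgInverse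

section Normed

variable {𝕜 R : Type*} [NormedField 𝕜] [NormedRing R] [NormedAlgebra 𝕜 R]
  [HasSummableGeomSeries R]

theorem isUnit_add_smul_of_norm_mul_lt_one {a : R} (ha : IsUnit a) (d : R) {t : 𝕜}
    (ht : ‖t‖ * ‖Ring.inverse a * d‖ < 1) : IsUnit (a + t • d) := by
  have h : ‖-(t • (Ring.inverse a * d))‖ < 1 := by rwa [norm_neg, norm_smul]
  have : a + t • d = a * (1 - -(t • (Ring.inverse a * d))) := by
    rw [sub_neg_eq_add, mul_add, mul_one, mul_smul_comm, ← mul_assoc,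
      Ring.mul_inverse_cancel _ ha, one_mul]
  rw [this]
  exact ha.mul (Units.oneSub _ h).isUnit

theorem isUnit_sub_smul_of_norm_mul_lt_one {a : R} (ha : IsUnit a) (d : R) {t : 𝕜}
    (ht : ‖t‖ * ‖Ring.inverse a * d‖ < 1) : IsUnit (a - t • d) := by
  simpa [sub_eq_add_neg] using isUnit_add_smul_of_norm_mul_lt_one ha d (t := -t) (by rwa [norm_neg])

variable [NeZero (2 : 𝕜)]

theorem avgInverse_eq_of_norm_mul_le {a : R} (ha : IsUnit a) (d : R) {t : 𝕜}
    (ht : ‖t‖ * ‖Ring.inverse a * d‖ ≤ 1 / 2) :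
    avgInverse a d t = Ring.inverse a + (t • (Ring.inverse a * d)) ^ 2 * avgInverse a d t :=
  have ht' : ‖t‖ * ‖Ring.inverse a * d‖ < 1 := by linarith
  avgInverse_eq ha d (isUnit_add_smul_of_norm_mul_lt_one ha d ht')
    (isUnit_sub_smul_of_norm_mul_lt_one ha d ht')

theorem norm_avgInverse_le {a : R} (ha : IsUnit a) (d : R) {t : 𝕜}
    (ht : ‖t‖ * ‖Ring.inverse a * d‖ ≤ 1 / 2) : ‖avgInverse a d t‖ ≤ 2 * ‖Ring.inverse a‖ := by
  refine norm_le_two_mul_of_eq_add_mul (avgInverse_eq_of_norm_mul_le ha d ht) ?_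
  calc ‖(t • (Ring.inverse a * d)) ^ 2‖ ≤ ‖t • (Ring.inverse a * d)‖ ^ 2 := norm_pow_le' _ two_pos
    _ = (‖t‖ * ‖Ring.inverse a * d‖) ^ 2 := by rw [norm_smul]
    _ ≤ 1 / 2 := by nlinarith [mul_nonneg (norm_nonneg t) (norm_nonneg (Ring.inverse a * d))]

theorem avgInverse_eq_sum_add {a : R} (ha : IsUnit a) (d : R) {t : 𝕜}
    (ht : ‖t‖ * ‖Ring.inverse a * d‖ ≤ 1 / 2) (N : ℕ) :
    avgInverse a d t =
      ∑ j ∈ range N, (t ^ 2) ^ j • (((Ring.inverse a * d) ^ 2) ^ j * Ring.inverse a)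
        + (t ^ 2) ^ N • (((Ring.inverse a * d) ^ 2) ^ N * avgInverse a d t) := by
  conv_lhs => rw [eq_geom_sum_mul_add_pow_mul (avgInverse_eq_of_norm_mul_le ha d ht) N]
  simp_rw [smul_pow, sum_mul, smul_mul_assoc]

theorem norm_sum_smul_avgInverse_sub_inverse_le {ι : Type*} [Fintype ι] {a : R} (ha : IsUnit a)
    (d : R) {m : ℕ} (hm : 0 < m) {β τ : ι → 𝕜} (hβ : ∀ j < m, ∑ i, β i * (τ i ^ 2) ^ j = 0 ^ j)
    {ε : 𝕜} (hε : ∀ i, ‖τ i * ε‖ * ‖Ring.inverse a * d‖ ≤ 1 / 2) :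
    ‖∑ i, β i • avgInverse a d (τ i * ε) - Ring.inverse a‖
      ≤ 2 * ‖Ring.inverse a‖ * ‖((Ring.inverse a * d) ^ 2) ^ m‖
        * (∑ i, ‖β i‖ * ‖τ i‖ ^ (2 * m)) * ‖ε‖ ^ (2 * m) := by
  set P := ((Ring.inverse a * d) ^ 2) ^ m
  have hrem : ∑ i, β i • avgInverse a d (τ i * ε) - Ring.inverse a
      = ∑ i, β i • (τ i ^ 2 * ε ^ 2) ^ m • (P * avgInverse a d (τ i * ε)) := by
    conv_lhs => enter [1, 2, i]; rw [avgInverse_eq_sum_add ha d (hε i) m]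
    simp_rw [smul_add, sum_add_distrib, mul_pow (τ _) ε]
    rw [sum_smul_sum_range_pow_smul_eq _ hm hβ, pow_zero, one_mul, add_sub_cancel_left]
  have hterm : ∀ i, ‖β i • (τ i ^ 2 * ε ^ 2) ^ m • (P * avgInverse a d (τ i * ε))‖
      ≤ 2 * ‖Ring.inverse a‖ * ‖P‖ * (‖β i‖ * ‖τ i‖ ^ (2 * m)) * ‖ε‖ ^ (2 * m) := fun i =>
    calc ‖β i • (τ i ^ 2 * ε ^ 2) ^ m • (P * avgInverse a d (τ i * ε))‖
        = ‖β i‖ * (‖τ i‖ ^ 2 * ‖ε‖ ^ 2) ^ m * ‖P * avgInverse a d (τ i * ε)‖ := by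
          simp only [norm_smul, norm_pow, norm_mul, mul_assoc]
      _ ≤ ‖β i‖ * (‖τ i‖ ^ 2 * ‖ε‖ ^ 2) ^ m * (‖P‖ * (2 * ‖Ring.inverse a‖)) := by
          gcongr
          exact (norm_mul_le _ _).trans (by gcongr; exact norm_avgInverse_le ha d (hε i))
      _ = _ := by ring
  rw [hrem, mul_sum, sum_mul]
  exact (norm_sum_le _ _).trans (sum_le_sum fun i _ => hterm i)

end Normed

section EuclideanMatrix

variable {n : ℕ}

theorem mulVecE_eq_toEuclideanCLM (M : Matrix (Fin n) (Fin n) ℝ) (v : EuclideanSpace ℝ (Fin n)) :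
    mulVecE M v = Matrix.toEuclideanCLM (𝕜 := ℝ) M v :=
  rfl

theorem norm_mulVecE_le (M : Matrix (Fin n) (Fin n) ℝ) (v : EuclideanSpace ℝ (Fin n)) :
    ‖mulVecE M v‖ ≤ ‖M‖ * ‖v‖ :=
  (Matrix.toEuclideanCLM (𝕜 := ℝ) M).le_opNorm v

theorem sum_smul_mulVecE_sub_mulVecE {ι : Type*} (s : Finset ι) (β : ι → ℝ)
    (M : ι → Matrix (Fin n) (Fin n) ℝ) (N : Matrix (Fin n) (Fin n) ℝ)
    (v : EuclideanSpace ℝ (Fin n)) :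
    ∑ i ∈ s, β i • mulVecE (M i) v - mulVecE N v = mulVecE (∑ i ∈ s, β i • M i - N) v := by
  simp [mulVecE_eq_toEuclideanCLM]

theorem xhat_eq_mulVecE_avgInverse (A D : Matrix (Fin n) (Fin n) ℝ)
    (b : EuclideanSpace ℝ (Fin n)) (ε α : ℝ) :
    xhat A D b ε α = mulVecE (avgInverse A D (α * ε)) b := by
  simp [xhat, avgInverse, mulVecE_eq_toEuclideanCLM, Matrix.nonsing_inv_eq_ringInverse]

end EuclideanMatrix

theorem linear_combination_recovers_solution_general (n m : ℕ) (hm : 0 < m)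
    (A D : Matrix (Fin n) (Fin n) ℝ) (hA : IsUnit A)
    (b : EuclideanSpace ℝ (Fin n)) :
    ∃ β : Fin m → ℝ, ∃ C > (0 : ℝ), ∃ ε₀ > (0 : ℝ), ∀ ε : ℝ, 0 < |ε| → |ε| < ε₀ →
      (∀ α : Fin m, IsUnit (A + ((((α : ℕ) + 1 : ℝ)) * ε) • D)
          ∧ IsUnit (A - ((((α : ℕ) + 1 : ℝ)) * ε) • D)) ∧
      ‖(∑ α : Fin m, β α • xhat A D b ε ((α : ℕ) + 1)) - mulVecE A⁻¹ b‖
          ≤ C * |ε| ^ (2 * m) := by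
  have hnodes : Function.Injective fun α : Fin m => ((α : ℕ) + 1 : ℝ) ^ 2 := fun α α' h =>
    Fin.ext <| by exact_mod_cast add_right_cancel ((sq_eq_sq₀ (by positivity) (by positivity)).1 h)
  obtain ⟨β, hβ⟩ := exists_sum_mul_pow_eq_zero_pow hnodes
  rw [Fintype.card_fin] at hβ
  set p := Ring.inverse A * D
  set K := 2 * ‖Ring.inverse A‖ * ‖(p ^ 2) ^ m‖ *
    ∑ α : Fin m, ‖β α‖ * ‖((α : ℕ) + 1 : ℝ)‖ ^ (2 * m)
  refine ⟨β, K * ‖b‖ + 1, by positivity, 1 / (2 * m * ‖p‖ + 1), by positivity,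
    fun ε _ hε => ?_⟩
  have hsmall : ∀ α : Fin m, ‖((α : ℕ) + 1 : ℝ) * ε‖ * ‖p‖ ≤ 1 / 2 := by
    intro α
    have hα : ((α : ℕ) + 1 : ℝ) ≤ m := by exact_mod_cast α.2
    have hε' := (lt_div_iff₀ (by positivity)).1 hε
    rw [norm_mul, Real.norm_eq_abs, Real.norm_eq_abs, abs_of_pos (by positivity)]
    nlinarith [abs_nonneg ε, norm_nonneg p]
  refine ⟨fun α => ⟨isUnit_add_smul_of_norm_mul_lt_one hA D (by linarith [hsmall α]),
    isUnit_sub_smul_of_norm_mul_lt_one hA D (by linarith [hsmall α])⟩, ?_⟩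
  simp_rw [xhat_eq_mulVecE_avgInverse, sum_smul_mulVecE_sub_mulVecE,
    Matrix.nonsing_inv_eq_ringInverse]
  calc _ ≤ K * ‖ε‖ ^ (2 * m) * ‖b‖ := (norm_mulVecE_le _ _).trans <| by
        gcongr; exact norm_sum_smul_avgInverse_sub_inverse_le hA D hm hβ hsmall
    _ ≤ (K * ‖b‖ + 1) * |ε| ^ (2 * m) := by
        rw [Real.norm_eq_abs]; nlinarith [pow_nonneg (abs_nonneg ε) (2 * m)]

/-- Theorem 1: there exist coefficients `β₁, …, β_m`, `C > 0` and `ε₀ > 0` such that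
for every `ε` with `0 < |ε| < ε₀`, all matrices `A ± (α ε) • D` are invertible and the
linear combination `∑_α β_α x̂_α(ε)` recovers `x* = A⁻¹ b` with `O(ε^(2m))` accuracy. -/
theorem linear_combination_recovers_solution (n m : ℕ) (hn : 0 < n) (hm : 0 < m)
    (A D : Matrix (Fin n) (Fin n) ℝ) (hA : IsUnit A)
    (b : EuclideanSpace ℝ (Fin n)) (hb : ‖b‖ = 1) :
    ∃ β : Fin m → ℝ, ∃ C > (0 : ℝ), ∃ ε₀ > (0 : ℝ), ∀ ε : ℝ, 0 < |ε| → |ε| < ε₀ →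
      (∀ α : Fin m, IsUnit (A + ((((α : ℕ) + 1 : ℝ)) * ε) • D)
          ∧ IsUnit (A - ((((α : ℕ) + 1 : ℝ)) * ε) • D)) ∧
      ‖(∑ α : Fin m, β α • xhat A D b ε ((α : ℕ) + 1)) - mulVecE A⁻¹ b‖
          ≤ C * |ε| ^ (2 * m) :=
  linear_combination_recovers_solution_general n m hm A D hA b
end

section
/- Let n and m be positive integers, let A be an invertible n×n real matrix, let D be an n×n real matrix, let b ∈ ℝⁿ, and let ε be a real number with m · |ε| · ‖A⁻¹ * D‖ < 1, where ‖·‖ is the operator norm induced by the Euclidean vector norm. For each integer α with 1 ≤ α ≤ m define x̂_α := (1/2)((A + (α·ε) • D)⁻¹ b + (A − (α·ε) • D)⁻¹ b), and for each k ≥ 0 define v_k := ((ε • (A⁻¹ * D))^{2k} * A⁻¹) b ∈ ℝⁿ. Then for every α with 1 ≤ α ≤ m, x̂_α = Σ_{k=0}^∞ (Γ)_{α,k} v_k where (Γ)_{α,k} = α^{2k}; i.e., the vector of averaged perturbation solutions equals the (infinite) Vandermonde matrix Γ applied to the sequence (v_k)_{k≥0}, with absolute convergence of each series. -/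
open scoped Matrix.Norms.L2Operator

open scoped Ring

/-! With `M = A⁻¹ D` and `t = α ε M`, we have `(A ± α ε D)⁻¹ = (1 ± t)⁻¹ A⁻¹`, and `‖t‖ < 1`.
Adding the geometric series of `-t` and of `t`, the odd powers cancel, so the average of the
two inverses is `∑ t^(2k) A⁻¹ = ∑ α^(2k) (ε M)^(2k) A⁻¹`. Applying this to `b` gives the claim;
absolute convergence is automatic in the finite-dimensional space `ℝⁿ`. -/

theorem hasSum_pow_two_mul_of_norm_lt_one {R : Type*} [NormedRing R] [NormedSpace ℝ R]
    [HasSummableGeomSeries R] {t : R} (ht : ‖t‖ < 1) :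
    HasSum (fun k => t ^ (2 * k)) ((1 / 2 : ℝ) • ((1 + t)⁻¹ʳ + (1 - t)⁻¹ʳ)) := by
  have hsum := (hasSum_geom_series_inverse (-t) (by rwa [norm_neg])).add
    (hasSum_geom_series_inverse t ht)
  rw [sub_neg_eq_add] at hsum
  have heven :
      HasSum (fun k => (-t) ^ (2 * k) + t ^ (2 * k)) ((1 + t)⁻¹ʳ + (1 - t)⁻¹ʳ) := by
    refine ((mul_right_injective₀ (two_ne_zero : (2 : ℕ) ≠ 0)).hasSum_iff ?_).mpr hsum
    intro k hk
    have hodd : Odd k :=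
      Nat.not_even_iff_odd.mp fun ⟨j, hj⟩ => hk ⟨j, show 2 * j = k by omega⟩
    simp only [hodd.neg_pow, neg_add_cancel]
  convert heven.const_smul (1 / 2 : ℝ) using 2 with k
  rw [(even_two_mul k).neg_pow, ← two_smul ℝ, smul_smul]
  norm_num

theorem Matrix.inv_add_eq_ringInverse_mul_inv {ι K : Type*} [Fintype ι] [DecidableEq ι]
    [CommRing K] {A : Matrix ι ι K} (hA : IsUnit A) (B : Matrix ι ι K) :
    (A + B)⁻¹ = (1 + A⁻¹ * B)⁻¹ʳ * A⁻¹ := by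
  have hfactor : A + B = A * (1 + A⁻¹ * B) := by
    rw [Matrix.mul_add, mul_one, ← mul_assoc, Matrix.mul_nonsing_inv A
      ((Matrix.isUnit_iff_isUnit_det A).mp hA), one_mul]
  rw [hfactor, Matrix.mul_inv_rev, Matrix.nonsing_inv_eq_ringInverse (1 + A⁻¹ * B)]

noncomputable def mulVecECLM {n : ℕ} (b : EuclideanSpace ℝ (Fin n)) :
    Matrix (Fin n) (Fin n) ℝ →L[ℝ] EuclideanSpace ℝ (Fin n) :=
  LinearMap.toContinuousLinearMap
    (LinearMap.applyₗ b ∘ₗ (Matrix.toLpLin 2 2 : Matrix (Fin n) (Fin n) ℝ ≃ₗ[ℝ] _).toLinearMap)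

theorem mulVecECLM_apply {n : ℕ} (b : EuclideanSpace ℝ (Fin n))
    (N : Matrix (Fin n) (Fin n) ℝ) : mulVecECLM b N = mulVecE N b := rfl

theorem hasSum_xhat {n : ℕ} {A : Matrix (Fin n) (Fin n) ℝ} (hA : IsUnit A)
    (D : Matrix (Fin n) (Fin n) ℝ) (b : EuclideanSpace ℝ (Fin n)) {ε α : ℝ}
    (h : |α| * |ε| * ‖A⁻¹ * D‖ < 1) :
    HasSum (fun k => α ^ (2 * k) • mulVecE ((ε • (A⁻¹ * D)) ^ (2 * k) * A⁻¹) b)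
      (xhat A D b ε α) := by
  set t := (α * ε) • (A⁻¹ * D)
  have ht : ‖t‖ < 1 := by rwa [norm_smul, Real.norm_eq_abs, abs_mul]
  have hplus : (A + (α * ε) • D)⁻¹ = (1 + t)⁻¹ʳ * A⁻¹ := by
    rw [Matrix.inv_add_eq_ringInverse_mul_inv hA, Matrix.mul_smul]
  have hminus : (A - (α * ε) • D)⁻¹ = (1 - t)⁻¹ʳ * A⁻¹ := by
    rw [sub_eq_add_neg, Matrix.inv_add_eq_ringInverse_mul_inv hA, Matrix.mul_neg,
      Matrix.mul_smul, ← sub_eq_add_neg]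
  have hsum := ((hasSum_pow_two_mul_of_norm_lt_one ht).mul_right A⁻¹).mapL (mulVecECLM b)
  convert hsum using 1
  · funext k
    rw [← mulVecECLM_apply, ← map_smul, ← smul_mul_assoc, ← smul_pow, smul_smul]
  · rw [xhat, hplus, hminus, smul_mul_assoc, add_mul, map_smul, map_add, mulVecECLM_apply,
      mulVecECLM_apply]

theorem xhat_eq_vandermonde_applied_general (n m : ℕ)
    (A D : Matrix (Fin n) (Fin n) ℝ) (hA : IsUnit A) (b : EuclideanSpace ℝ (Fin n))
    (ε : ℝ) (hε : (m : ℝ) * |ε| * ‖A⁻¹ * D‖ < 1) :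
    ∀ α : Fin m,
      Summable (fun k : ℕ =>
          ‖(((α : ℕ) + 1 : ℝ)) ^ (2 * k) •
              mulVecE ((ε • (A⁻¹ * D)) ^ (2 * k) * A⁻¹) b‖) ∧
        xhat A D b ε ((α : ℕ) + 1)
          = ∑' k : ℕ, (((α : ℕ) + 1 : ℝ)) ^ (2 * k) •
              mulVecE ((ε • (A⁻¹ * D)) ^ (2 * k) * A⁻¹) b := by
  intro α
  have hα : |((α : ℕ) + 1 : ℝ)| ≤ m := by
    rw [abs_of_pos (by positivity)]
    exact_mod_cast α.isLt
  have hsum := hasSum_xhat hA D b (lt_of_le_of_lt (by gcongr) hε)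
  exact ⟨summable_norm_iff.mpr hsum.summable, hsum.tsum_eq.symm⟩

/-- The vector of averaged perturbation solutions equals the infinite Vandermonde
matrix `Γ` (with entries `Γ_{α,k} = α^(2k)`) applied to the sequence
`v_k = ((ε • (A⁻¹ D))^(2k) A⁻¹) b`, with absolute convergence of each series. -/
theorem xhat_eq_vandermonde_applied (n m : ℕ) (hn : 0 < n) (hm : 0 < m)
    (A D : Matrix (Fin n) (Fin n) ℝ) (hA : IsUnit A) (b : EuclideanSpace ℝ (Fin n))
    (ε : ℝ) (hε : (m : ℝ) * |ε| * ‖A⁻¹ * D‖ < 1) :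
    ∀ α : Fin m,
      Summable (fun k : ℕ =>
          ‖(((α : ℕ) + 1 : ℝ)) ^ (2 * k) •
              mulVecE ((ε • (A⁻¹ * D)) ^ (2 * k) * A⁻¹) b‖) ∧
        xhat A D b ε ((α : ℕ) + 1)
          = ∑' k : ℕ, (((α : ℕ) + 1 : ℝ)) ^ (2 * k) •
              mulVecE ((ε • (A⁻¹ * D)) ^ (2 * k) * A⁻¹) b :=
  xhat_eq_vandermonde_applied_general n m A D hA b ε hε
end
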